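/- Let w be a right-infinite word with p_w(n) ≤ Cn for all n ≥ 1. Then the number of equivalence classes of uniformly recurrent words v with Fac(v) ⊆ Fac(w) is finite; specifically, #URec(w) ≤ (limsup_n (p_w(n+1) − p_w(n)) + 1) + C². -/
import Mathlib


/-- The factor of `w` of length `n` starting at position `i`. -/
def factorAt {A : Type*} (w : ℕ → A) (i n : ℕ) : List A :=
  (List.range n).map (fun k => w (i + k))

/-- `u` is a (finite, contiguous) factor of the right-infinite word `w`. -/
def IsFactorOf {A : Type*} (u : List A) (w : ℕ → A) : Prop :=
  ∃ i, u = factorAt w i u.length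

/-- The set of factors of `w`. -/
def Fac {A : Type*} (w : ℕ → A) : Set (List A) := {u | IsFactorOf u w}

/-- `w` is recurrent: every factor occurs at arbitrarily large positions. -/
def Recurrent {A : Type*} (w : ℕ → A) : Prop :=
  ∀ u ∈ Fac w, ∀ N : ℕ, ∃ i ≥ N, u = factorAt w i u.length

/-- `w` is uniformly recurrent: each factor occurs in every sufficiently long factor. -/
def UniformlyRecurrent {A : Type*} (w : ℕ → A) : Prop :=
  ∀ u ∈ Fac w, ∃ N : ℕ, ∀ y ∈ Fac w, y.length = N → u <:+: y

/-- `w` is (purely) periodic. -/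
def PeriodicWord {A : Type*} (w : ℕ → A) : Prop :=
  ∃ p ≥ 1, ∀ n, w (n + p) = w n

/-- `w` is eventually periodic. -/
def EventuallyPeriodicWord {A : Type*} (w : ℕ → A) : Prop :=
  ∃ p ≥ 1, ∃ N, ∀ n ≥ N, w (n + p) = w n

/-- The factor complexity function of `w`. -/
noncomputable def cplx {A : Type*} (w : ℕ → A) (n : ℕ) : ℕ :=
  Set.ncard {u | u ∈ Fac w ∧ u.length = n}

/-- A set of finite words is factor-closed. -/
def FactorClosed {A : Type*} (S : Set (List A)) : Prop :=
  ∀ y ∈ S, ∀ u, u <:+: y → u ∈ S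

/-- The radical of `w`. -/
def Rad {A : Type*} (w : ℕ → A) : Set (List A) :=
  {z | z ∈ Fac w ∧ ∀ Y : Finset (List A),
    (∀ y ∈ Y, y ∈ Fac w ∧ z <:+: y) →
    ∃ N : ℕ, ∀ L : List (List A), L.length = N → (∀ y ∈ L, y ∈ Y) →
      L.flatten ∉ Fac w}

/-- The recurrent spectrum of `w`, with classes identified with their factor sets. -/
def RecSpec {A : Type*} (w : ℕ → A) : Set (Set (List A)) :=
  {F | ∃ v : ℕ → A, Recurrent v ∧ F = Fac v ∧ Fac v ⊆ Fac w}

section basics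
variable {A : Type*} (w : ℕ → A)

@[simp] lemma factorAt_length (i n : ℕ) : (factorAt w i n).length = n := by
  simp [factorAt]

lemma factorAt_getElem (i n k : ℕ) (hk : k < n) :
    (factorAt w i n)[k]'(by simpa [factorAt] using hk) = w (i + k) := by
  simp [factorAt]

lemma factorAt_ext_iff (w' : ℕ → A) (i i' n : ℕ) :
    factorAt w i n = factorAt w' i' n ↔ ∀ k < n, w (i + k) = w' (i' + k) := by
  constructor
  · intro hEq k hk
    have := congrArg (fun l => l[k]?) hEq
    simpa [factorAt, hk] using this
  · intro hk
    apply List.ext_getElem (by simp)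
    intro k h1 h2
    simp only [factorAt, List.getElem_map, List.getElem_range]
    exact hk k (by simpa [factorAt] using h1)

lemma factorAt_append (i m n : ℕ) :
    factorAt w i (m + n) = factorAt w i m ++ factorAt w (i + m) n := by
  simp only [factorAt, List.range_add, List.map_append, List.map_map]
  congr 1
  simp [Function.comp, Nat.add_assoc]

lemma factorAt_mem_Fac (i n : ℕ) : factorAt w i n ∈ Fac w :=
  ⟨i, by simp⟩

lemma factorAt_succ (i n : ℕ) :
    factorAt w i (n + 1) = factorAt w i n ++ [w (i + n)] := by
  rw [factorAt_append]
  simp [factorAt, List.range_succ]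

lemma Fac_infix_closed {u y : List A} (hy : y ∈ Fac w) (hu : u <:+: y) :
    u ∈ Fac w := by
  obtain ⟨i, hi⟩ := hy
  obtain ⟨s, t, hst⟩ := hu
  refine ⟨i + s.length, ?_⟩
  have hlen : y.length = s.length + (u.length + t.length) := by
    rw [← hst]; simp
  rw [hlen, factorAt_append, factorAt_append] at hi
  rw [← hst, List.append_assoc] at hi
  have h1 := List.append_inj hi (by simp)
  have h2 := List.append_inj h1.2 (by simp)
  exact h2.1

lemma take_factorAt (i n m : ℕ) (hm : m ≤ n) :
    (factorAt w i n).take m = factorAt w i m := by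
  obtain ⟨k, rfl⟩ := Nat.exists_eq_add_of_le hm
  rw [factorAt_append, List.take_left']
  simp

variable [Finite A]

lemma facN_finite (n : ℕ) : {u | u ∈ Fac w ∧ u.length = n}.Finite :=
  (List.finite_length_eq A n).subset (fun u hu => hu.2)

lemma cplx_pos (n : ℕ) : 1 ≤ Set.ncard {u | u ∈ Fac w ∧ u.length = n} := by
  have hne : (factorAt w 0 n) ∈ {u | u ∈ Fac w ∧ u.length = n} :=
    ⟨factorAt_mem_Fac w 0 n, by simp⟩
  exact (Set.ncard_pos (facN_finite w n)).mpr ⟨_, hne⟩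

open Finset in
lemma cplx_step (n : ℕ) (RS : Finset (List A))
    (hRS : ∀ u ∈ RS, u ∈ Fac w ∧ u.length = n ∧
      ∃ a b, a ≠ b ∧ u ++ [a] ∈ Fac w ∧ u ++ [b] ∈ Fac w) :
    Set.ncard {u | u ∈ Fac w ∧ u.length = n} + RS.card ≤
      Set.ncard {u | u ∈ Fac w ∧ u.length = n + 1} := by
  classical
  set B := (facN_finite w n).toFinset with hB
  set B' := (facN_finite w (n+1)).toFinset with hB'
  have hmemB : ∀ u, u ∈ B ↔ u ∈ Fac w ∧ u.length = n := by
    intro u; simp [hB, Set.Finite.mem_toFinset]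
  have hmemB' : ∀ u, u ∈ B' ↔ u ∈ Fac w ∧ u.length = n + 1 := by
    intro u; simp [hB', Set.Finite.mem_toFinset]
  let fib : List A → Finset (List A) := fun u => B'.filter (fun y => y.take n = u)
  have hcover : B' = B.biUnion fib := by
    ext y
    simp only [mem_biUnion]
    constructor
    · intro hy
      refine ⟨y.take n, ?_, ?_⟩
      · rw [hmemB]
        have hy' := (hmemB' y).mp hy
        refine ⟨Fac_infix_closed w hy'.1 (y.take_prefix n).isInfix, ?_⟩
        simp [hy'.2]
      · simp [fib, hy]
    · rintro ⟨u, _, hy⟩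
      exact (mem_filter.mp hy).1
  have hdisj : ∀ u ∈ B, ∀ v ∈ B, u ≠ v → Disjoint (fib u) (fib v) := by
    intro u _ v _ huv
    refine Finset.disjoint_left.mpr ?_
    intro y hyu hyv
    exact huv ((mem_filter.mp hyu).2 ▸ (mem_filter.mp hyv).2 ▸ rfl)
  have hcard : B'.card = ∑ u ∈ B, (fib u).card := by
    rw [hcover]; exact card_biUnion hdisj
  have h1 : ∀ u ∈ B, 1 ≤ (fib u).card := by
    intro u hu
    obtain ⟨⟨i, hi⟩, hlen⟩ := (hmemB u).mp hu
    refine card_pos.mpr ⟨factorAt w i (n+1), ?_⟩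
    rw [mem_filter, hmemB']
    refine ⟨⟨factorAt_mem_Fac w i (n+1), by simp⟩, ?_⟩
    rw [take_factorAt w i (n+1) n (by omega), hi, hlen]
  have h2 : ∀ u ∈ RS, 2 ≤ (fib u).card := by
    intro u hu
    obtain ⟨hf, hlen, a, b, hab, ha, hb⟩ := hRS u hu
    have hmem : ∀ c, u ++ [c] ∈ Fac w → u ++ [c] ∈ fib u := by
      intro c hc
      rw [mem_filter, hmemB']
      exact ⟨⟨hc, by simp [hlen]⟩, by simp [← hlen]⟩
    exact one_lt_card.mpr ⟨u ++ [a], hmem a ha, u ++ [b], hmem b hb, by simp [hab]⟩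
  have hsub : RS ⊆ B := fun u hu => (hmemB u).mpr ⟨(hRS u hu).1, (hRS u hu).2.1⟩
  have key : B.card + RS.card ≤ B'.card := by
    rw [hcard, ← Finset.sum_sdiff hsub]
    have e0 : (B \ RS).card = B.card - RS.card := Finset.card_sdiff_of_subset hsub
    have e0' : RS.card ≤ B.card := Finset.card_le_card hsub
    have e1 : (B \ RS).card = ∑ u ∈ B \ RS, 1 := by simp
    have e2 : ∀ u ∈ B \ RS, 1 ≤ (fib u).card := fun u hu => h1 u (mem_sdiff.mp hu).1
    have e3 : RS.card * 2 = ∑ u ∈ RS, 2 := by simp [Nat.mul_comm]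
    have := Finset.sum_le_sum e2
    have := Finset.sum_le_sum h2
    omega
  rw [Set.ncard_eq_toFinset_card _ (facN_finite w n),
    Set.ncard_eq_toFinset_card _ (facN_finite w (n+1))]
  exact key

end basics

section ur
variable {A : Type*}

lemma Fac_subset_of_common {v v' : ℕ → A} (hv : UniformlyRecurrent v)
    (hcom : ∀ n : ℕ, ∃ u, u ∈ Fac v ∧ u ∈ Fac v' ∧ n ≤ u.length) :
    Fac v ⊆ Fac v' := by
  intro u hu
  obtain ⟨N, hN⟩ := hv u hu
  obtain ⟨z, hz, hz', hzlen⟩ := hcom N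
  obtain ⟨i, hi⟩ := hz
  have hy : factorAt v i N ∈ Fac v := factorAt_mem_Fac v i N
  have huy : u <:+: factorAt v i N := hN _ hy (by simp)
  have hyz : factorAt v i N <:+: z := by
    have : (factorAt v i z.length).take N = factorAt v i N :=
      take_factorAt v i z.length N hzlen
    rw [hi]
    exact this ▸ ((factorAt v i z.length).take_prefix N).isInfix
  exact Fac_infix_closed v' hz' (huy.trans hyz)

lemma eventually_disjoint {v v' : ℕ → A} (hv : UniformlyRecurrent v)
    (hv' : UniformlyRecurrent v') (hne : Fac v ≠ Fac v') :
    ∃ n0, ∀ u, u ∈ Fac v → u ∈ Fac v' → u.length < n0 := by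
  by_contra hcon
  push_neg at hcon
  apply hne
  have hcom : ∀ n : ℕ, ∃ u, u ∈ Fac v ∧ u ∈ Fac v' ∧ n ≤ u.length := by
    intro n
    obtain ⟨u, h1, h2, h3⟩ := hcon n
    exact ⟨u, h1, h2, h3⟩
  have hcom' : ∀ n : ℕ, ∃ u, u ∈ Fac v' ∧ u ∈ Fac v ∧ n ≤ u.length := by
    intro n; obtain ⟨u, h1, h2, h3⟩ := hcom n; exact ⟨u, h2, h1, h3⟩
  exact le_antisymm (Fac_subset_of_common hv hcom) (Fac_subset_of_common hv' hcom')

lemma occurs_at_large {v w : ℕ → A} (hsub : Fac v ⊆ Fac w) (M n : ℕ) :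
    ∃ i ≥ M, factorAt w i n = factorAt v M n := by
  have hu : factorAt v 0 (M + n) ∈ Fac w := hsub (factorAt_mem_Fac v 0 (M + n))
  obtain ⟨j, hj⟩ := hu
  simp only [factorAt_length] at hj
  rw [factorAt_ext_iff] at hj
  refine ⟨j + M, by omega, ?_⟩
  rw [factorAt_ext_iff]
  intro k hk
  have := hj (M + k) (by omega)
  simpa [Nat.add_assoc] using this.symm

lemma exists_exit {v w : ℕ → A} (n i j : ℕ) (hij : i ≤ j)
    (hi : factorAt w i n ∈ Fac v) (hj : factorAt w j n ∉ Fac v) :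
    ∃ t, factorAt w t n ∈ Fac v ∧ factorAt w (t+1) n ∉ Fac v := by
  by_contra hcon
  push_neg at hcon
  have hall : ∀ k, factorAt w (i + k) n ∈ Fac v := by
    intro k
    induction k with
    | zero => simpa using hi
    | succ k ih => have := hcon (i + k) ih; simpa [Nat.add_assoc] using this
  have := hall (j - i)
  rw [Nat.add_sub_cancel' hij] at this
  exact hj this

lemma rightSpecial_exists {v v' w : ℕ → A} (n : ℕ)
    (hsub : Fac v ⊆ Fac w) (hsub' : Fac v' ⊆ Fac w)
    (hdisj : ∀ u : List A, u.length = n → u ∈ Fac v → u ∈ Fac v' → False) :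
    ∃ u, u ∈ Fac v ∧ u.length = n ∧
      ∃ a b, a ≠ b ∧ u ++ [a] ∈ Fac w ∧ u ++ [b] ∈ Fac w := by
  obtain ⟨i, -, hi⟩ := occurs_at_large hsub 0 n
  obtain ⟨j, hji, hj⟩ := occurs_at_large hsub' i n
  have hiv : factorAt w i n ∈ Fac v := hi ▸ factorAt_mem_Fac v 0 n
  have hjv : factorAt w j n ∉ Fac v := by
    intro hmem
    exact hdisj _ (by simp) hmem (hj ▸ factorAt_mem_Fac v' i n)
  obtain ⟨t, ht, ht'⟩ := exists_exit n i j hji hiv hjv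
  obtain ⟨s, hs⟩ := id ht
  simp only [factorAt_length] at hs
  refine ⟨factorAt w t n, ht, by simp, w (t + n), v (s + n), ?_, ?_, ?_⟩
  · intro hab
    apply ht'
    have hext : factorAt w t n ++ [w (t + n)] ∈ Fac v := by
      rw [hab, hs, ← factorAt_succ]
      exact factorAt_mem_Fac v s (n + 1)
    have hinf : factorAt w (t+1) n <:+: factorAt w t n ++ [w (t + n)] := by
      rw [← factorAt_succ]
      have : factorAt w t (n + 1) = factorAt w t 1 ++ factorAt w (t + 1) n := by
        rw [← factorAt_append]; ring_nf
      rw [this]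
      exact (List.suffix_append _ _).isInfix
    exact Fac_infix_closed v hext hinf
  · rw [← factorAt_succ]; exact factorAt_mem_Fac w t (n + 1)
  · rw [hs, ← factorAt_succ]; exact hsub (factorAt_mem_Fac v s (n + 1))

lemma telescope (f : ℕ → ℕ) (m n1 : ℕ) (hstep : ∀ n ≥ n1, f n + m ≤ f (n + 1)) :
    ∀ k, m * k ≤ f (n1 + k) := by
  intro k
  induction k with
  | zero => simp
  | succ k ih =>
    have := hstep (n1 + k) (by omega)
    have : f (n1 + k) + m ≤ f (n1 + (k + 1)) := by
      rw [show n1 + (k + 1) = (n1 + k) + 1 by omega]; exact this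
    have hmk : m * (k + 1) = m * k + m := by ring
    omega

lemma card_le_max [Finite A] (w : ℕ → A) (C : ℕ)
    (h : ∀ n ≥ 1, Set.ncard {u | u ∈ Fac w ∧ u.length = n} ≤ C * n)
    (T : Finset (Set (List A)))
    (hT : ∀ F ∈ T, ∃ v : ℕ → A, UniformlyRecurrent v ∧ F = Fac v ∧ Fac v ⊆ Fac w) :
    T.card ≤ max 1 C := by
  classical
  by_cases hm : T.card ≤ 1
  · exact hm.trans (le_max_left _ _)
  push_neg at hm
  choose v hUR hFeq hsub using hT
  -- eventual pairwise disjointness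
  have hev : ∀ᶠ n in Filter.atTop, ∀ F ∈ T, ∀ F' ∈ T, F ≠ F' →
      ∀ u : List A, u.length = n → u ∈ F → u ∈ F' → False := by
    rw [Filter.eventually_all_finset]
    intro F hF
    rw [Filter.eventually_all_finset]
    intro F' hF'
    by_cases hne : F = F'
    · filter_upwards with n hc; exact absurd hne hc
    · obtain ⟨n0, hn0⟩ := eventually_disjoint (hUR F hF) (hUR F' hF')
        (by rw [← hFeq F hF, ← hFeq F' hF']; exact hne)
      rw [Filter.eventually_atTop]
      refine ⟨n0, fun n hn _ u hlen hu hu' => ?_⟩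
      have := hn0 u (by rwa [← hFeq F hF]) (by rwa [← hFeq F' hF'])
      omega
  obtain ⟨n1, hn1⟩ := Filter.eventually_atTop.mp hev
  have hstep : ∀ n ≥ n1, Set.ncard {u | u ∈ Fac w ∧ u.length = n} + T.card ≤
      Set.ncard {u | u ∈ Fac w ∧ u.length = n + 1} := by
    intro n hn
    have hspec : ∀ x : {F // F ∈ T}, ∃ z, z ∈ Fac (v x.1 x.2) ∧ z.length = n ∧
        ∃ a b, a ≠ b ∧ z ++ [a] ∈ Fac w ∧ z ++ [b] ∈ Fac w := by
      rintro ⟨F, hF⟩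
      obtain ⟨F', hF', hne⟩ := Finset.exists_mem_ne hm F
      refine rightSpecial_exists n (hsub F hF) (hsub F' hF') ?_
      intro z hlen hz hz'
      exact hn1 n hn F hF F' hF' hne.symm z hlen
        ((hFeq F hF) ▸ hz) ((hFeq F' hF') ▸ hz')
    choose z hz1 hz2 hz3 using hspec
    have hinj : Set.InjOn z ↑T.attach := by
      rintro ⟨F, hF⟩ - ⟨F', hF'⟩ - hzz
      by_contra hne
      have hne' : F ≠ F' := fun hFF => hne (by simp [hFF])
      refine hn1 n hn F hF F' hF' hne' (z ⟨F, hF⟩) (hz2 _) ?_ ?_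
      · exact (hFeq F hF).symm.subset (hz1 ⟨F, hF⟩)
      · rw [hzz]; exact (hFeq F' hF').symm.subset (hz1 ⟨F', hF'⟩)
    have hcardRS : (T.attach.image z).card = T.card := by
      rw [Finset.card_image_of_injOn hinj, Finset.card_attach]
    have := cplx_step w n (T.attach.image z) ?_
    · rwa [hcardRS] at this
    · intro y hy
      obtain ⟨x, -, rfl⟩ := Finset.mem_image.mp hy
      exact ⟨hsub x.1 x.2 (hz1 x), hz2 x, hz3 x⟩
  -- telescoping
  have htel := telescope _ T.card n1 hstep
  by_contra hcon
  push_neg at hcon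
  rw [max_lt_iff] at hcon
  set m := T.card
  have hCm : C + 1 ≤ m := hcon.2
  set k := C * n1 + 1 with hk
  have h1 : m * k ≤ C * (n1 + k) := (htel k).trans (h (n1 + k) (by omega))
  have h2 : (C + 1) * k ≤ m * k := Nat.mul_le_mul_right k hCm
  nlinarith [h1, h2]


end ur

theorem card_uniformlyRecurrent_spectrum_le {A : Type*} [Finite A] (w : ℕ → A)
    (C : ℕ) (h : ∀ n ≥ 1, cplx w n ≤ C * n) (L : ℕ)
    (hL : Filter.atTop.limsup (fun n : ℕ => cplx w (n + 1) - cplx w n) = L) :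
    {F : Set (List A) | ∃ v : ℕ → A, UniformlyRecurrent v ∧ F = Fac v ∧
        Fac v ⊆ Fac w}.Finite ∧
    Set.ncard {F : Set (List A) | ∃ v : ℕ → A, UniformlyRecurrent v ∧ F = Fac v ∧
        Fac v ⊆ Fac w} ≤ (L + 1) + C ^ 2 := by
  classical
  set S := {F : Set (List A) | ∃ v : ℕ → A, UniformlyRecurrent v ∧ F = Fac v ∧
      Fac v ⊆ Fac w} with hS
  have h' : ∀ n ≥ 1, Set.ncard {u | u ∈ Fac w ∧ u.length = n} ≤ C * n :=
    fun n hn => by simpa [cplx] using h n hn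
  have hC1 : 1 ≤ C := by
    have := (cplx_pos w 1).trans (h' 1 le_rfl)
    omega
  have hboundT : ∀ T : Finset (Set (List A)), (∀ F ∈ T, F ∈ S) →
      T.card ≤ (L + 1) + C ^ 2 := by
    intro T hTsub
    have h1 := card_le_max w C h' T (fun F hF => hTsub F hF)
    have h2 : max 1 C = C := max_eq_right hC1
    have h3 : C ≤ C ^ 2 := Nat.le_self_pow (by norm_num) C
    omega
  have hfin : S.Finite := by
    by_contra hinf
    obtain ⟨T, hTsub, hTcard⟩ :=
      Set.Infinite.exists_subset_card_eq hinf ((L + 1) + C ^ 2 + 1)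
    have := hboundT T (fun F hF => hTsub hF)
    omega
  refine ⟨hfin, ?_⟩
  rw [Set.ncard_eq_toFinset_card _ hfin]
  exact hboundT hfin.toFinset (fun F hF => hfin.mem_toFinset.mp hF)
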